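/- arXiv:2206.01808 — 2 statements merged into one kernel-verified Lean document; each statement's English description precedes it below -/
import Mathlib

section
/- For every integer n ≥ 1, the 2^{2n} matrices ω_S Γ_S, where S ranges over all subsets of {0,1,…,2n−1}, Γ_S denotes the product of the Jordan–Wigner matrices Γ_j for j ∈ S taken in increasing order of index (Γ_∅ = I), and ω_S = 1 if |S|(|S|−1)/2 is even and ω_S = i if |S|(|S|−1)/2 is odd, form a basis of the real vector space of Hermitian 2^n × 2^n complex matrices. -/
open Matrix

noncomputable section

/-- The Pauli matrix `σ_x`. -/
def σx : Matrix (Fin 2) (Fin 2) ℂ := !![0, 1; 1, 0]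

/-- The Pauli matrix `σ_y`. -/
def σy : Matrix (Fin 2) (Fin 2) ℂ := !![0, -Complex.I; Complex.I, 0]

/-- The Pauli matrix `σ_z`. -/
def σz : Matrix (Fin 2) (Fin 2) ℂ := !![1, 0; 0, -1]

/-- The `n`-fold Kronecker product of a family of `2 × 2` matrices, realized on the
index type `Fin n → Fin 2` (factor `l = 0` is the leftmost tensor factor). -/
def tensorFam {n : ℕ} (M : Fin n → Matrix (Fin 2) (Fin 2) ℂ) :
    Matrix (Fin n → Fin 2) (Fin n → Fin 2) ℂ :=
  Matrix.of fun i j => ∏ l, M l (i l) (j l)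

/-- The family of `2 × 2` factors of the Jordan–Wigner matrix `Γ_a` for `a ∈ {0, …, 2n-1}`:
writing `a = 2k` or `a = 2k+1`, the factors are `I₂^{⊗(n-k-1)} ⊗ σ ⊗ σ_z^{⊗ k}` where
`σ = σ_x` if `a` is even and `σ = σ_y` if `a` is odd. -/
def JWfactors (n : ℕ) (a : Fin (2 * n)) : Fin n → Matrix (Fin 2) (Fin 2) ℂ := fun l =>
  if (l : ℕ) < n - (a : ℕ) / 2 - 1 then 1
  else if (l : ℕ) = n - (a : ℕ) / 2 - 1 then (if (a : ℕ) % 2 = 0 then σx else σy)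
  else σz

/-- The Jordan–Wigner matrices `Γ_0, …, Γ_{2n-1}`, as `2^n × 2^n` complex matrices. -/
def JW (n : ℕ) (a : Fin (2 * n)) : Matrix (Fin (2 ^ n)) (Fin (2 ^ n)) ℂ :=
  Matrix.reindex finFunctionFinEquiv finFunctionFinEquiv (tensorFam (JWfactors n a))

/-- For a subset `S ⊆ {0, …, 2n-1}`, the product `Γ_S` of the Jordan–Wigner matrices `Γ_j`,
`j ∈ S`, taken in increasing order of index (with `Γ_∅ = I`). -/
def JWprod (n : ℕ) (S : Finset (Fin (2 * n))) : Matrix (Fin (2 ^ n)) (Fin (2 ^ n)) ℂ :=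
  ((S.sort (· ≤ ·)).map (JW n)).prod

/-- The phase `ω_S`: `1` if `|S|(|S|-1)/2` is even and `i` if it is odd. -/
def JWphase (n : ℕ) (S : Finset (Fin (2 * n))) : ℂ :=
  if Even (S.card * (S.card - 1) / 2) then 1 else Complex.I

/-! The `Γ_a` are Hermitian involutions that pairwise anticommute. Reversing the ordered product
`Γ_S` costs the sign `(-1)^(|S|(|S|-1)/2)`, which is what makes `ω_S Γ_S` Hermitian and
`Γ_S Γ_S = ±1`. Conjugating `Γ_S` by `Γ_b` gives the sign `(-1)^|S \ {b}|`; since the number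
`2n` of generators is even, for `S ≠ T` some `b` gives `Γ_S` and `Γ_T` opposite signs, so
`Γ_b (Γ_S Γ_T) Γ_b = -Γ_S Γ_T` and `tr (Γ_S Γ_T) = 0`. Trace orthogonality makes the `4^n`
matrices `ω_S Γ_S` a complex basis of all matrices, and averaging a Hermitian matrix with its
adjoint shows that the real parts of its coordinates already express it. -/

lemma σx_mul_self : σx * σx = 1 := by
  ext i j; fin_cases i <;> fin_cases j <;> simp [σx]

lemma σy_mul_self : σy * σy = 1 := by
  ext i j; fin_cases i <;> fin_cases j <;> simp [σy]

lemma σz_mul_self : σz * σz = 1 := by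
  ext i j; fin_cases i <;> fin_cases j <;> simp [σz]

lemma σx_isHermitian : σx.IsHermitian := by
  ext i j; fin_cases i <;> fin_cases j <;> simp [σx]

lemma σy_isHermitian : σy.IsHermitian := by
  ext i j; fin_cases i <;> fin_cases j <;> simp [σy]

lemma σz_isHermitian : σz.IsHermitian := by
  ext i j; fin_cases i <;> fin_cases j <;> simp [σz]

lemma σx_mul_σy : σx * σy = -(σy * σx) := by
  ext i j; fin_cases i <;> fin_cases j <;> simp [σx, σy]

lemma σx_mul_σz : σx * σz = -(σz * σx) := by
  ext i j; fin_cases i <;> fin_cases j <;> simp [σx, σz]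

lemma σy_mul_σz : σy * σz = -(σz * σy) := by
  ext i j; fin_cases i <;> fin_cases j <;> simp [σy, σz]

section tensorFam

variable {n : ℕ}

lemma tensorFam_mul (M N : Fin n → Matrix (Fin 2) (Fin 2) ℂ) :
    tensorFam M * tensorFam N = tensorFam (fun l => M l * N l) := by
  ext i j
  simp only [tensorFam, mul_apply, of_apply, Finset.prod_univ_sum, Fintype.piFinset_univ]
  exact Finset.sum_congr rfl fun k _ => Finset.prod_mul_distrib.symm

lemma tensorFam_one : tensorFam (fun _ : Fin n => (1 : Matrix (Fin 2) (Fin 2) ℂ)) = 1 := by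
  ext i j
  by_cases h : i = j
  · subst h; simp [tensorFam]
  · obtain ⟨l, hl⟩ := Function.ne_iff.mp h
    simpa [tensorFam, one_apply, h] using Finset.prod_eq_zero (Finset.mem_univ l) (by simp [hl])

lemma tensorFam_conjTranspose (M : Fin n → Matrix (Fin 2) (Fin 2) ℂ) :
    (tensorFam M)ᴴ = tensorFam (fun l => (M l)ᴴ) := by
  ext i j
  simp [tensorFam, conjTranspose_apply]

lemma tensorFam_eq_neg_of_forall_ne (M N : Fin n → Matrix (Fin 2) (Fin 2) ℂ) (p : Fin n)
    (hp : M p = -N p) (h : ∀ l ≠ p, M l = N l) : tensorFam M = -tensorFam N := by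
  ext i j
  simp only [tensorFam, of_apply, Fintype.prod_eq_mul_prod_compl p, hp]
  rw [Finset.prod_congr rfl fun l hl =>
    by rw [h l (Finset.mem_compl.mp hl ∘ Finset.mem_singleton.mpr)]]
  simp

end tensorFam

section AnticommutingFamily

variable {R ι : Type*} [Ring R]

def orderedProd [LinearOrder ι] (γ : ι → R) (S : Finset ι) : R :=
  ((S.sort (· ≤ ·)).map γ).prod

variable {γ : ι → R}

lemma mul_prod_map_eq_zsmul_prod_map_mul [DecidableEq ι]
    (hanti : Pairwise fun a b => γ a * γ b = -(γ b * γ a)) (b : ι) (l : List ι) :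
    γ b * (l.map γ).prod = (-1 : ℤ) ^ l.countP (· ≠ b) • ((l.map γ).prod * γ b) := by
  induction l with
  | nil => simp
  | cons a t ih =>
    simp only [List.map_cons, List.prod_cons, List.countP_cons]
    by_cases hab : a = b
    · subst hab
      simp only [ne_self_iff_false, decide_false, Bool.false_eq_true, if_false, add_zero]
      conv_lhs => rw [ih]
      rw [mul_smul_comm, mul_assoc]
    · simp only [hab, ne_eq, not_false_eq_true, decide_true, if_true, pow_succ, mul_neg_one,
        neg_smul]
      rw [← mul_assoc, hanti (Ne.symm hab), neg_mul, mul_assoc, ih, mul_smul_comm, mul_assoc]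

lemma prod_map_reverse_mul_prod_map (hsq : ∀ a, γ a * γ a = 1) (l : List ι) :
    (l.reverse.map γ).prod * (l.map γ).prod = 1 := by
  induction l with
  | nil => simp
  | cons a t ih =>
    simp only [List.reverse_cons, List.map_append, List.prod_append, List.map_cons,
      List.prod_cons, List.map_nil, List.prod_nil, mul_one]
    rw [mul_assoc, ← mul_assoc (γ a), hsq, one_mul, ih]

lemma prod_map_reverse_of_nodup [DecidableEq ι]
    (hanti : Pairwise fun a b => γ a * γ b = -(γ b * γ a)) {l : List ι} (hl : l.Nodup) :
    (l.reverse.map γ).prod = (-1 : ℤ) ^ l.length.choose 2 • (l.map γ).prod := by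
  induction l with
  | nil => simp
  | cons a t ih =>
    obtain ⟨hat, ht⟩ := List.nodup_cons.mp hl
    have hcount : t.countP (· ≠ a) = t.length :=
      List.countP_eq_length.mpr fun x hx => by simpa using ne_of_mem_of_not_mem hx hat
    have hcomm := mul_prod_map_eq_zsmul_prod_map_mul hanti a t
    rw [hcount] at hcomm
    simp only [List.reverse_cons, List.map_append, List.prod_append, List.map_cons,
      List.prod_cons, List.map_nil, List.prod_nil, mul_one, List.length_cons,
      Nat.choose_succ_succ', Nat.choose_one_right]
    rw [ih ht, smul_mul_assoc, hcomm, smul_smul, ← pow_add, add_right_comm, ← two_mul, pow_add,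
      pow_mul]
    simp

variable [LinearOrder ι]

lemma mul_orderedProd_mul_self (hanti : Pairwise fun a b => γ a * γ b = -(γ b * γ a))
    (hsq : ∀ a, γ a * γ a = 1) (b : ι) (S : Finset ι) :
    γ b * orderedProd γ S * γ b = (-1 : ℤ) ^ (S.erase b).card • orderedProd γ S := by
  have hcount : (S.sort (· ≤ ·)).countP (· ≠ b) = (S.erase b).card := by
    rw [List.countP_eq_length_filter, ← List.toFinset_card_of_nodup ((S.sort_nodup _).filter _),
      List.toFinset_filter, Finset.sort_toFinset]
    simp [Finset.filter_ne']
  rw [orderedProd, mul_prod_map_eq_zsmul_prod_map_mul hanti, hcount, smul_mul_assoc, mul_assoc,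
    hsq, mul_one]

lemma orderedProd_mul_self (hanti : Pairwise fun a b => γ a * γ b = -(γ b * γ a))
    (hsq : ∀ a, γ a * γ a = 1) (S : Finset ι) :
    orderedProd γ S * orderedProd γ S = (-1 : ℤ) ^ S.card.choose 2 • 1 := by
  have h := prod_map_reverse_mul_prod_map hsq (S.sort (· ≤ ·))
  rw [prod_map_reverse_of_nodup hanti (S.sort_nodup _), Finset.length_sort, smul_mul_assoc] at h
  rw [orderedProd, ← h, smul_smul, ← mul_pow]
  simp

lemma star_orderedProd (hanti : Pairwise fun a b => γ a * γ b = -(γ b * γ a))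
    [StarRing R] (hγ : ∀ a, IsSelfAdjoint (γ a)) (S : Finset ι) :
    star (orderedProd γ S) = (-1 : ℤ) ^ S.card.choose 2 • orderedProd γ S := by
  have h := unop_map_list_prod (starMulEquiv (R := R)) ((S.sort (· ≤ ·)).map γ)
  simp only [List.map_map, Function.comp_def, MulOpposite.unop_op, starMulEquiv_apply,
    fun a => (hγ a).star_eq, ← List.map_reverse] at h
  rw [← Finset.length_sort (· ≤ ·), orderedProd, ← prod_map_reverse_of_nodup hanti
    (S.sort_nodup _), h]

end AnticommutingFamily

lemma Matrix.trace_eq_zero_of_mul_mul_eq_neg {m R : Type*} [Fintype m] [DecidableEq m]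
    [CommRing R] [IsAddTorsionFree R] {u X : Matrix m m R} (hu : u * u = 1)
    (h : u * X * u = -X) : X.trace = 0 := by
  rw [← self_eq_neg, ← trace_neg, ← h, trace_mul_cycle, hu, one_mul]

lemma Finset.exists_odd_card_erase_add_card_erase {α : Type*} [Fintype α] [DecidableEq α]
    (hα : Even (Fintype.card α)) {S T : Finset α} (h : S ≠ T) :
    ∃ b, Odd ((S.erase b).card + (T.erase b).card) := by
  have hcard (U : Finset α) (b : α) : (U.erase b).card + (if b ∈ U then 1 else 0) = U.card := by
    split_ifs with hb
    exacts [Finset.card_erase_add_one hb, by simp [Finset.erase_eq_of_notMem hb]]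
  suffices ∃ b, ¬((b ∈ S ↔ b ∈ T) ↔ Even (S.card + T.card)) by
    obtain ⟨b, hb⟩ := this
    refine ⟨b, Nat.odd_iff.mpr ?_⟩
    have hS := hcard S b
    have hT := hcard T b
    rw [Nat.even_iff] at hb
    by_cases hbS : b ∈ S <;> by_cases hbT : b ∈ T <;>
      simp only [hbS, hbT, if_true, if_false, iff_self, true_iff, false_iff, iff_false, iff_true,
        not_true_eq_false, not_not] at hS hT hb <;> omega
  by_cases hST : Even (S.card + T.card)
  · simpa [hST, Finset.ext_iff] using h
  · by_contra! hcompl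
    have hT : T = Sᶜ := by
      ext b
      have := hcompl b
      simp only [Finset.mem_compl]
      tauto
    exact hST (by rwa [hT, Finset.card_add_card_compl])

section MatrixFamily

variable {m ι : Type*} [Fintype m] [DecidableEq m] [Fintype ι] [LinearOrder ι]

lemma trace_orderedProd_mul_orderedProd_of_ne {R : Type*} [CommRing R] [IsAddTorsionFree R]
    {γ : ι → Matrix m m R} (hanti : Pairwise fun a b => γ a * γ b = -(γ b * γ a))
    (hsq : ∀ a, γ a * γ a = 1) (hι : Even (Fintype.card ι)) {S T : Finset ι} (h : S ≠ T) :
    (orderedProd γ S * orderedProd γ T).trace = 0 := by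
  obtain ⟨b, hb⟩ := Finset.exists_odd_card_erase_add_card_erase hι h
  refine trace_eq_zero_of_mul_mul_eq_neg (hsq b) ?_
  calc γ b * (orderedProd γ S * orderedProd γ T) * γ b
      = (γ b * orderedProd γ S * γ b) * (γ b * orderedProd γ T * γ b) := by
        simp only [mul_assoc, ← mul_assoc (γ b) (γ b), hsq, one_mul]
    _ = -(orderedProd γ S * orderedProd γ T) := by
        rw [mul_orderedProd_mul_self hanti hsq, mul_orderedProd_mul_self hanti hsq,
          smul_mul_smul_comm, ← pow_add, hb.neg_one_pow, neg_one_zsmul]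

lemma linearIndependent_orderedProd {K : Type*} [Field K] [CharZero K] [Nonempty m]
    {γ : ι → Matrix m m K} (hanti : Pairwise fun a b => γ a * γ b = -(γ b * γ a))
    (hsq : ∀ a, γ a * γ a = 1) (hι : Even (Fintype.card ι)) :
    LinearIndependent K (orderedProd γ) :=
  LinearMap.BilinForm.linearIndependent_of_iIsOrtho
    (B := (LinearMap.mul K (Matrix m m K)).compr₂ (traceLinearMap m K K))
    (fun _ _ h => trace_orderedProd_mul_orderedProd_of_ne hanti hsq hι h)
    (fun S => by
      simp only [LinearMap.compr₂_apply, LinearMap.mul_apply', traceLinearMap_apply,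
        orderedProd_mul_self hanti hsq, trace_smul, trace_one]
      simp)

end MatrixFamily

lemma span_real_eq_selfAdjoint_of_span_complex_eq_top {M ι : Type*} [Fintype ι] [AddCommGroup M]
    [Module ℂ M] [Module ℝ M] [IsScalarTower ℝ ℂ M] [StarAddMonoid M] [StarModule ℂ M]
    [StarModule ℝ M] {v : ι → M} (hv : ∀ i, IsSelfAdjoint (v i))
    (hspan : Submodule.span ℂ (Set.range v) = ⊤) :
    (Submodule.span ℝ (Set.range v) : Set M) = {x | IsSelfAdjoint x} := by
  refine subset_antisymm ?_ fun x hx => ?_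
  · exact (Submodule.span_le (p := selfAdjoint.submodule ℝ M)).mpr (Set.range_subset_iff.mpr hv)
  obtain ⟨c, rfl⟩ :=
    (Submodule.mem_span_range_iff_exists_fun ℂ).mp (hspan ▸ Submodule.mem_top (x := x))
  refine (Submodule.mem_span_range_iff_exists_fun ℝ).mpr ⟨fun i => (c i).re, ?_⟩
  have hstar : star (∑ i, c i • v i) = ∑ i, star (c i) • v i := by
    simp [star_sum, star_smul, fun i => (hv i).star_eq]
  calc ∑ i, (c i).re • v i = ∑ i, (2⁻¹ : ℂ) • (c i • v i + star (c i) • v i) := by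
        refine Finset.sum_congr rfl fun i _ => ?_
        rw [← algebraMap_smul ℂ, Complex.coe_algebraMap, Complex.re_eq_add_conj, ← add_smul,
          smul_smul, div_eq_inv_mul]
        rfl
    _ = (2⁻¹ : ℂ) • (∑ i, c i • v i + star (∑ i, c i • v i)) := by
        rw [hstar, ← Finset.sum_add_distrib, Finset.smul_sum]
    _ = ∑ i, c i • v i := by
        rw [hx.star_eq, ← two_smul ℂ, smul_smul, inv_mul_cancel₀ two_ne_zero, one_smul]

section JW

variable {n : ℕ}

lemma JWfactors_mul_self (a : Fin (2 * n)) (l : Fin n) :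
    JWfactors n a l * JWfactors n a l = 1 := by
  unfold JWfactors
  split_ifs <;> simp [σx_mul_self, σy_mul_self, σz_mul_self]

lemma JWfactors_isHermitian (a : Fin (2 * n)) (l : Fin n) : (JWfactors n a l).IsHermitian := by
  unfold JWfactors
  split_ifs <;> simp [σx_isHermitian, σy_isHermitian, σz_isHermitian]

/-- Away from the site `n - a/2 - 1` of the Pauli factor of `Γ_a`, one of the two factors is `1`
or both are `σ_z`. -/
lemma JWfactors_mul_comm_of_ne {a b : Fin (2 * n)} (hab : (a : ℕ) / 2 ≤ b / 2) {l : Fin n}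
    (hl : (l : ℕ) ≠ n - a / 2 - 1) :
    JWfactors n a l * JWfactors n b l = JWfactors n b l * JWfactors n a l := by
  have := b.isLt
  unfold JWfactors
  split_ifs <;> first | omega | simp

lemma JWfactors_mul_anticomm_of_eq {a b : Fin (2 * n)} (hne : a ≠ b)
    (hab : (a : ℕ) / 2 ≤ b / 2) {l : Fin n} (hl : (l : ℕ) = n - a / 2 - 1) :
    JWfactors n a l * JWfactors n b l = -(JWfactors n b l * JWfactors n a l) := by
  have := Fin.val_ne_of_ne hne
  have := b.isLt
  unfold JWfactors
  split_ifs <;>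
    first
    | omega
    | exact σx_mul_σy
    | exact σx_mul_σz
    | exact σy_mul_σz
    | exact neg_eq_iff_eq_neg.mp σx_mul_σy.symm

lemma JW_mul (a b : Fin (2 * n)) :
    JW n a * JW n b = reindex finFunctionFinEquiv finFunctionFinEquiv
      (tensorFam fun l => JWfactors n a l * JWfactors n b l) := by
  simp only [JW, reindex_apply, submatrix_mul_equiv, tensorFam_mul]

lemma JW_mul_self (a : Fin (2 * n)) : JW n a * JW n a = 1 := by
  rw [JW_mul, funext (JWfactors_mul_self a), tensorFam_one, reindex_apply, submatrix_one_equiv]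

lemma JW_isHermitian (a : Fin (2 * n)) : (JW n a).IsHermitian := by
  rw [IsHermitian, JW, conjTranspose_reindex, tensorFam_conjTranspose,
    funext fun l => (JWfactors_isHermitian a l).eq]

lemma JW_anticomm : Pairwise fun a b : Fin (2 * n) => JW n a * JW n b = -(JW n b * JW n a) := by
  intro a b hne
  wlog hab : (a : ℕ) / 2 ≤ b / 2 generalizing a b
  · rw [this hne.symm (by omega), neg_neg]
  have := b.isLt
  rw [JW_mul, JW_mul, tensorFam_eq_neg_of_forall_ne _ _ ⟨n - a / 2 - 1, by omega⟩
    (JWfactors_mul_anticomm_of_eq hne hab rfl)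
    fun l hl => JWfactors_mul_comm_of_ne hab fun h => hl (Fin.ext h)]
  rfl

lemma JWprod_eq_orderedProd : JWprod n = orderedProd (JW n) := rfl

lemma JWphase_smul_JWprod_isHermitian (S : Finset (Fin (2 * n))) :
    (JWphase n S • JWprod n S).IsHermitian := by
  rw [isHermitian_iff_isSelfAdjoint, IsSelfAdjoint, star_smul, JWprod_eq_orderedProd,
    star_orderedProd JW_anticomm fun a => (JW_isHermitian a).isSelfAdjoint, smul_comm,
    Nat.choose_two_right, JWphase]
  split_ifs with h
  · simp [h.neg_one_pow]
  · simp [(Nat.not_even_iff_odd.mp h).neg_one_pow]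

lemma linearIndependent_JWphase_smul_JWprod (n : ℕ) :
    LinearIndependent ℂ fun S : Finset (Fin (2 * n)) => JWphase n S • JWprod n S := by
  have hphase (S : Finset (Fin (2 * n))) : JWphase n S ≠ 0 := by
    unfold JWphase
    split_ifs <;> simp
  exact (linearIndependent_orderedProd JW_anticomm JW_mul_self (by simp)).units_smul
    fun S => Units.mk0 _ (hphase S)

end JW

theorem jordan_wigner_products_basis_of_hermitian_matrices_general (n : ℕ) :
    LinearIndependent ℝ (fun S : Finset (Fin (2 * n)) => JWphase n S • JWprod n S) ∧
    (Submodule.span ℝ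
        (Set.range (fun S : Finset (Fin (2 * n)) => JWphase n S • JWprod n S)) :
          Set (Matrix (Fin (2 ^ n)) (Fin (2 ^ n)) ℂ)) =
      {A : Matrix (Fin (2 ^ n)) (Fin (2 ^ n)) ℂ | A.IsHermitian} := by
  have hli := linearIndependent_JWphase_smul_JWprod n
  have hspan := hli.span_eq_top_of_card_eq_finrank
    (by simp [Fintype.card_finset, Module.finrank_matrix, pow_mul, ← mul_pow])
  refine ⟨hli.restrict_scalars' ℝ, ?_⟩
  simp only [isHermitian_iff_isSelfAdjoint]
  exact span_real_eq_selfAdjoint_of_span_complex_eq_top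
    (fun S => (JWphase_smul_JWprod_isHermitian S).isSelfAdjoint) hspan

/-- For every `n ≥ 1`, the `2^(2n)` matrices `ω_S Γ_S`, indexed by the subsets `S` of
`{0, …, 2n-1}`, form a basis of the real vector space of Hermitian `2^n × 2^n` complex
matrices: they are linearly independent over `ℝ` and their real span is exactly the set of
Hermitian matrices. -/
theorem jordan_wigner_products_basis_of_hermitian_matrices (n : ℕ) (hn : 1 ≤ n) :
    LinearIndependent ℝ (fun S : Finset (Fin (2 * n)) => JWphase n S • JWprod n S) ∧
    (Submodule.span ℝ
        (Set.range (fun S : Finset (Fin (2 * n)) => JWphase n S • JWprod n S)) :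
          Set (Matrix (Fin (2 ^ n)) (Fin (2 ^ n)) ℂ)) =
      {A : Matrix (Fin (2 ^ n)) (Fin (2 ^ n)) ℂ | A.IsHermitian} :=
  jordan_wigner_products_basis_of_hermitian_matrices_general n
end
end

section
/- Let H_1, …, H_L be Hermitian d×d complex matrices, let Λ = max_j ‖H_j‖ (operator norm), let t ∈ ℝ and let r be a positive integer. Then ‖ exp(−it ∑_{j=1}^{L} H_j) − ( ∏_{j=1}^{L} exp(−i (t/r) H_j) )^r ‖ ≤ ((L Λ |t|)² / r) · exp(L Λ |t| / r), where ‖·‖ denotes the operator norm and exp the matrix exponential. -/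
/-!
Write `a_j = -i(t/r) H_j` and `s = ∑ ‖a_j‖ ≤ LΛ|t|/r`. Both `exp (∑ a_j)` and `∏ exp a_j` agree
with `1 + ∑ a_j` up to an error of norm at most `e^s - 1 - s ≤ s²/2 · e^s`, so one Trotter step
is off by at most `s² e^s`. Both factors are unitary, hence of norm `≤ 1`, and the telescoping
`X^r - Y^r = ∑ X^k (X - Y) Y^(r-1-k)` turns the one-step error into at most `r` times it.
-/

open scoped Nat

theorem Real.hasSum_exp_sub_one_sub (s : ℝ) :
    HasSum (fun n => s ^ (n + 2) / (n + 2)!) (Real.exp s - 1 - s) := by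
  simpa [Finset.sum_range_succ, sub_sub, ← Real.exp_eq_exp_ℝ] using
    (hasSum_nat_add_iff' 2).2 (NormedSpace.expSeries_div_hasSum_exp s)

theorem Real.exp_sub_one_sub_le_sq_div_two_mul_exp {s : ℝ} (hs : 0 ≤ s) :
    Real.exp s - 1 - s ≤ s ^ 2 / 2 * Real.exp s := by
  refine hasSum_le (fun n => ?_) (Real.hasSum_exp_sub_one_sub s)
    ((Real.exp_eq_exp_ℝ ▸ NormedSpace.expSeries_div_hasSum_exp s).mul_left (s ^ 2 / 2))
  have hfac : 2 * (n ! : ℝ) ≤ (n + 2)! := by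
    norm_cast
    rw [Nat.factorial_succ, Nat.factorial_succ, ← mul_assoc]
    exact Nat.mul_le_mul_right _ (by nlinarith)
  calc s ^ (n + 2) / (n + 2)! ≤ s ^ (n + 2) / (2 * n !) := by gcongr
    _ = s ^ 2 / 2 * (s ^ n / n !) := by ring

theorem List.norm_sum_le {E : Type*} [SeminormedAddCommGroup E] (l : List E) :
    ‖l.sum‖ ≤ (l.map norm).sum :=
  List.le_sum_of_subadditive norm norm_zero.le norm_add_le l

theorem norm_pow_sub_pow_le {R : Type*} [NormedRing R] [NormOneClass R] {x y : R}
    (hx : ‖x‖ ≤ 1) (hy : ‖y‖ ≤ 1) (n : ℕ) : ‖x ^ n - y ^ n‖ ≤ n * ‖x - y‖ := by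
  induction n with
  | zero => simp
  | succ n ih =>
    have hyn : ‖y ^ n‖ ≤ 1 := (norm_pow_le y n).trans (pow_le_one₀ (norm_nonneg y) hy)
    calc ‖x ^ (n + 1) - y ^ (n + 1)‖ = ‖x * (x ^ n - y ^ n) + (x - y) * y ^ n‖ := by
          rw [pow_succ' x, pow_succ y, ← (Commute.self_pow y n).eq]; noncomm_ring
      _ ≤ ‖x‖ * ‖x ^ n - y ^ n‖ + ‖x - y‖ * ‖y ^ n‖ := by
          grw [norm_add_le, norm_mul_le, norm_mul_le]
      _ ≤ (n + 1 : ℕ) * ‖x - y‖ := by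
          grw [hx, ih, hyn]
          push_cast
          linarith

theorem norm_le_one_of_mem_unitary {A : Type*} [NormedRing A] [StarRing A] [CStarRing A]
    [NormOneClass A] {u : A} (hu : u ∈ unitary A) : ‖u‖ ≤ 1 := by
  simpa using (CStarRing.norm_mem_unitary_mul (1 : A) hu).le

namespace NormedSpace

section BanachAlgebra

variable {𝔸 : Type*} [NormedRing 𝔸] [NormedAlgebra ℚ 𝔸] [CompleteSpace 𝔸]

theorem hasSum_exp_sub_one_sub (x : 𝔸) :
    HasSum (fun n => ((n + 2)! : ℚ)⁻¹ • x ^ (n + 2)) (exp x - 1 - x) := by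
  simpa [Finset.sum_range_succ, sub_sub] using
    (hasSum_nat_add_iff' 2).2 (exp_series_hasSum_exp' (𝕂 := ℚ) x)

theorem norm_exp_sub_one_sub_le {x : 𝔸} {s : ℝ} (hx : ‖x‖ ≤ s) :
    ‖exp x - 1 - x‖ ≤ Real.exp s - 1 - s := by
  refine (hasSum_exp_sub_one_sub x).norm_le_of_bounded (Real.hasSum_exp_sub_one_sub s) fun n => ?_
  calc ‖((n + 2)! : ℚ)⁻¹ • x ^ (n + 2)‖ ≤ ‖((n + 2)! : ℚ)⁻¹‖ * ‖x‖ ^ (n + 2) := by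
        grw [norm_smul_le, norm_pow_le' x (by omega)]
    _ ≤ s ^ (n + 2) / (n + 2)! := by
        rw [← Rat.norm_cast_real, div_eq_inv_mul]
        push_cast
        gcongr
        simp

variable [NormOneClass 𝔸]

theorem norm_exp_le (x : 𝔸) : ‖exp x‖ ≤ Real.exp ‖x‖ :=
  calc ‖exp x‖ = ‖(exp x - 1 - x) + 1 + x‖ := by congr 1; abel
    _ ≤ ‖exp x - 1 - x‖ + ‖(1 : 𝔸)‖ + ‖x‖ := norm_add₃_le
    _ ≤ Real.exp ‖x‖ := by
        grw [norm_exp_sub_one_sub_le le_rfl, norm_one]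
        linarith

theorem norm_list_prod_exp_sub_one_sub_sum_le (l : List 𝔸) :
    ‖(l.map exp).prod - 1 - l.sum‖ ≤ Real.exp (l.map norm).sum - 1 - (l.map norm).sum := by
  induction l with
  | nil => simp
  | cons a l ih =>
    set s := (l.map norm).sum
    have hS : ‖l.sum‖ ≤ s := l.norm_sum_le
    have ha : 0 ≤ Real.exp ‖a‖ - 1 - ‖a‖ := by linarith [Real.add_one_le_exp ‖a‖]
    have h1S : ‖1 + l.sum‖ ≤ 1 + s := by grw [norm_add_le, norm_one, hS]
    simp only [List.map_cons, List.prod_cons, List.sum_cons]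
    calc ‖exp a * (l.map exp).prod - 1 - (a + l.sum)‖
        = ‖exp a * ((l.map exp).prod - 1 - l.sum) + (exp a - 1 - a) * (1 + l.sum)
            + a * l.sum‖ := by congr 1; noncomm_ring
      _ ≤ ‖exp a‖ * ‖(l.map exp).prod - 1 - l.sum‖ + ‖exp a - 1 - a‖ * ‖1 + l.sum‖
            + ‖a‖ * ‖l.sum‖ := by grw [norm_add₃_le, norm_mul_le, norm_mul_le, norm_mul_le]
      _ ≤ Real.exp ‖a‖ * (Real.exp s - 1 - s) + (Real.exp ‖a‖ - 1 - ‖a‖) * (1 + s)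
            + ‖a‖ * s := by
          grw [norm_exp_le, ih, norm_exp_sub_one_sub_le le_rfl, h1S, hS]
      _ = Real.exp (‖a‖ + s) - 1 - (‖a‖ + s) := by rw [Real.exp_add]; ring

theorem norm_exp_list_sum_sub_prod_exp_le (l : List 𝔸) :
    ‖exp l.sum - (l.map exp).prod‖ ≤ (l.map norm).sum ^ 2 * Real.exp (l.map norm).sum := by
  set s := (l.map norm).sum
  have hS : ‖l.sum‖ ≤ s := l.norm_sum_le
  calc ‖exp l.sum - (l.map exp).prod‖
      = ‖(exp l.sum - 1 - l.sum) - ((l.map exp).prod - 1 - l.sum)‖ := by congr 1; abel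
    _ ≤ (Real.exp s - 1 - s) + (Real.exp s - 1 - s) := by
        grw [norm_sub_le, norm_exp_sub_one_sub_le hS, norm_list_prod_exp_sub_one_sub_sum_le]
    _ ≤ s ^ 2 * Real.exp s := by
        linarith [Real.exp_sub_one_sub_le_sq_div_two_mul_exp ((norm_nonneg _).trans hS)]

end BanachAlgebra

section CStarRing

variable {A : Type*} [NormedRing A] [StarRing A] [CStarRing A] [NormOneClass A]
  [NormedAlgebra ℚ A] [CompleteSpace A]

theorem norm_exp_list_sum_pow_sub_prod_exp_pow_le (l : List A)
    (hl : ∀ a ∈ l, a ∈ skewAdjoint A) (r : ℕ) :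
    ‖exp l.sum ^ r - (l.map exp).prod ^ r‖ ≤
      r * ((l.map norm).sum ^ 2 * Real.exp (l.map norm).sum) := by
  have hsum_unitary : exp l.sum ∈ unitary A :=
    exp_mem_unitary_of_mem_skewAdjoint (list_sum_mem hl)
  have hprod_unitary : (l.map exp).prod ∈ unitary A :=
    list_prod_mem (List.forall_mem_map.2 fun a ha => exp_mem_unitary_of_mem_skewAdjoint (hl a ha))
  grw [norm_pow_sub_pow_le (norm_le_one_of_mem_unitary hsum_unitary)
    (norm_le_one_of_mem_unitary hprod_unitary),
    norm_exp_list_sum_sub_prod_exp_le]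

theorem norm_exp_nsmul_sum_sub_prod_exp_pow_le {L : ℕ} (a : Fin L → A)
    (ha : ∀ j, a j ∈ skewAdjoint A) (r : ℕ) :
    ‖exp (r • ∑ j, a j) - ((List.finRange L).map fun j => exp (a j)).prod ^ r‖ ≤
      r * ((∑ j, ‖a j‖) ^ 2 * Real.exp (∑ j, ‖a j‖)) := by
  have := norm_exp_list_sum_pow_sub_prod_exp_pow_le ((List.finRange L).map a) (by simpa using ha) r
  simpa only [exp_nsmul, Fin.sum_univ_def, List.map_map, Function.comp_def] using this

end CStarRing

end NormedSpace

open scoped Matrix.Norms.L2Operator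

/-- First-order product (Lie–Trotter) formula error bound: for Hermitian `d × d` matrices
`H_1, …, H_L` with `Λ = max_j ‖H_j‖`, `t ∈ ℝ` and `r` a positive integer,
`‖exp(-it ∑_j H_j) - (∏_j exp(-i(t/r) H_j))^r‖ ≤ ((LΛ|t|)²/r) exp(LΛ|t|/r)`,
the product being taken in increasing order of `j`. -/
theorem trotter_first_order_error_bound (d L : ℕ)
    (H : Fin L → Matrix (Fin d) (Fin d) ℂ) (hherm : ∀ j, (H j).IsHermitian)
    (Λ : ℝ) (hΛ : Λ = ⨆ j : Fin L, ‖H j‖) (t : ℝ) (r : ℕ) (hr : 0 < r) :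
    ‖NormedSpace.exp ((-(Complex.I * (t : ℂ))) • ∑ j, H j) -
        (((List.finRange L).map
          (fun j => NormedSpace.exp ((-(Complex.I * ((t : ℂ) / (r : ℂ)))) • H j))).prod) ^ r‖ ≤
      ((L * Λ * |t|) ^ 2 / r) * Real.exp (L * Λ * |t| / r) := by
  -- For `d = 0` the operator norm of `1` is `0`, so `NormOneClass` is only available for `d > 0`.
  rcases isEmpty_or_nonempty (Fin d) with hd | hd
  · rw [Subsingleton.elim (_ - _) 0, norm_zero]
    positivity
  let : NormedAlgebra ℚ (Matrix (Fin d) (Fin d) ℂ) := .restrictScalars ℚ ℂ _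
  set τ : ℂ := -(Complex.I * ((t : ℂ) / (r : ℂ)))
  have hsum : (-(Complex.I * (t : ℂ))) • ∑ j, H j = r • ∑ j, τ • H j := by
    have hr' : (r : ℂ) ≠ 0 := Nat.cast_ne_zero.2 hr.ne'
    rw [← Finset.smul_sum, ← Nat.cast_smul_eq_nsmul ℂ, smul_smul]
    congr 1
    simp only [τ]
    field_simp
  have hskew : ∀ j, τ • H j ∈ skewAdjoint (Matrix (Fin d) (Fin d) ℂ) := fun j =>
    (hherm j).isSelfAdjoint.smul_mem_skewAdjoint (by simp [skewAdjoint.mem_iff, τ])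
  have hs : ∑ j, ‖τ • H j‖ ≤ L * Λ * |t| / r := by
    refine (Finset.sum_le_card_nsmul _ _ (|t| / r * Λ) fun j _ => ?_).trans_eq (by simp; ring)
    rw [norm_smul, show ‖τ‖ = |t| / r by simp [τ], hΛ]
    gcongr
    exact le_ciSup (Finite.bddAbove_range fun j => ‖H j‖) j
  rw [hsum]
  calc _ ≤ r * ((∑ j, ‖τ • H j‖) ^ 2 * Real.exp (∑ j, ‖τ • H j‖)) :=
        NormedSpace.norm_exp_nsmul_sum_sub_prod_exp_pow_le _ hskew r
    _ ≤ r * ((L * Λ * |t| / r) ^ 2 * Real.exp (L * Λ * |t| / r)) := by gcongr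
    _ = ((L * Λ * |t|) ^ 2 / r) * Real.exp (L * Λ * |t| / r) := by field_simp
end
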